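/- arXiv:1111.4023 — 5 statements merged into one kernel-verified Lean document; each statement's English description precedes it below -/
import Mathlib

section
/- Fix an integer k ≥ 1. There exists a constant C_k > 0 such that the following holds. Let p be a prime, let a_0, a_1, …, a_k ∈ F_p^*, and let t_0 = 0 < t_1 < … < t_k < p be integers. Set D = min over i in {0,…,k} of (max over j ≠ i of gcd(t_j − t_i, p−1)). Then the number Q of x ∈ F_p^* satisfying a_0 + a_1·x^{t_1} + … + a_k·x^{t_k} = 0 satisfies Q ≤ 2·p^{1 − 1/k}·D^{1/k} + C_k·p^{1 − 2/k}·D^{2/k}. -/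
/-!
Let `n = p - 1`, let `i₀` attain the minimum defining `D`, and let `R ≥ 1` with `R ^ k * D < n`.
By Dirichlet's box principle there is `1 ≤ r ≤ R ^ k` with `r * (t j - t i₀) ≡ s j (mod n)` and
`|s j| ≤ n / R`; since `r * D < n`, the `s j` with `j ≠ i₀` are nonzero. For each `c ∈ F_p^*` the
substitution `x = c * y ^ r` turns the equation into a nonzero polynomial equation in `y` of degree
at most `2 * (n / R)` (exponents `s j + n / R`), so averaging over `c` gives `Q ≤ 2 n / R`.
Taking `R` just below `(n / D) ^ (1 / k)` yields the bound with `C = 8`.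
-/

open Finset Polynomial

theorem Real.div_div_rpow {x y : ℝ} (hx : 0 < x) (hy : 0 ≤ y) (e : ℝ) :
    x / (x / y) ^ e = x ^ (1 - e) * y ^ e := by
  rw [Real.div_rpow hx.le hy, Real.rpow_sub hx, Real.rpow_one, div_div_eq_mul_div,
    mul_div_right_comm]

theorem Real.rpow_le_two_mul_rpow {x y e : ℝ} (hx : 0 < x) (hxy : x ≤ y) (hyx : y ≤ 2 * x)
    (he : -1 ≤ e) : x ^ e ≤ 2 * y ^ e := by
  have hy : 0 < y := hx.trans_le hxy
  rcases le_or_gt 0 e with he0 | he0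
  · exact (Real.rpow_le_rpow hx.le hxy he0).trans
      (le_mul_of_one_le_left (Real.rpow_nonneg hy.le e) one_le_two)
  · calc x ^ e = 2 ^ (-e) * (2 * x) ^ e := by
          rw [Real.mul_rpow zero_le_two hx.le, ← mul_assoc, ← Real.rpow_add zero_lt_two,
            neg_add_cancel, Real.rpow_zero, one_mul]
      _ ≤ 2 ^ (1 : ℝ) * y ^ e := by
          refine mul_le_mul ?_ (Real.rpow_le_rpow_of_nonpos hy hyx he0.le)
            (by positivity) (by positivity)
          exact Real.rpow_le_rpow_of_exponent_le one_le_two (by linarith)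
      _ = 2 * y ^ e := by rw [Real.rpow_one]

theorem le_two_mul_div_add_four_mul_div_sq {n Q B : ℝ} (hn : 0 ≤ n) (hB : 0 < B)
    (hQn : Q ≤ n) (hQ : ∀ R : ℕ, 0 < R → (R : ℝ) < B → Q ≤ 2 * n / R) :
    Q ≤ 2 * n / B + 4 * n / B ^ 2 := by
  rcases lt_or_ge B 2 with hB2 | hB2
  · have : n ≤ 4 * n / B ^ 2 := by
      rw [le_div_iff₀ (by positivity)]
      nlinarith [mul_nonneg hn (by nlinarith : (0 : ℝ) ≤ 4 - B ^ 2)]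
    have : 0 ≤ 2 * n / B := by positivity
    linarith
  · set R := ⌈B⌉₊ - 1
    have hceil := Nat.le_ceil B
    have hceil' := Nat.ceil_lt_add_one hB.le
    have hR : (R : ℝ) = ⌈B⌉₊ - 1 := by
      rw [Nat.cast_sub (Nat.one_le_iff_ne_zero.2 (by positivity)), Nat.cast_one]
    have hR0 : 0 < R := by
      have : (1 : ℝ) ≤ R := by linarith
      exact_mod_cast this
    calc Q ≤ 2 * n / R := hQ R hR0 (by linarith)
      _ ≤ 2 * n / (B - 1) := div_le_div_of_nonneg_left (by positivity) (by linarith) (by linarith)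
      _ ≤ 2 * n / B + 4 * n / B ^ 2 := by
        rw [div_add_div _ _ hB.ne' (by positivity), div_le_div_iff₀ (by linarith) (by positivity)]
        nlinarith [mul_nonneg hn (sub_nonneg.2 hB2), mul_nonneg hn hB.le]

theorem Int.abs_sub_lt_of_ediv_eq {a b w : ℤ} (hw : 0 < w) (h : a / w = b / w) :
    |a - b| < w := by
  have hsub : a - b = a % w - b % w := by rw [Int.emod_def, Int.emod_def, h]; ring
  rw [hsub]
  exact abs_sub_lt_of_nonneg_of_lt (Int.emod_nonneg _ hw.ne') (Int.emod_lt_of_pos _ hw)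
    (Int.emod_nonneg _ hw.ne') (Int.emod_lt_of_pos _ hw)

theorem not_natCast_dvd_mul_of_mul_gcd_lt {n r : ℕ} {e : ℤ} (hr : 0 < r)
    (h : r * Int.gcd e n < n) : ¬ (n : ℤ) ∣ r * e := by
  intro hdvd
  have hn : n ∣ r * Int.gcd e n := by
    simpa [Int.gcd_mul_left] using Int.dvd_gcd hdvd (dvd_mul_left (n : ℤ) r)
  have hpos : 0 < r * Int.gcd e n := Nat.mul_pos hr (Int.gcd_pos_of_ne_zero_right _ (by omega))
  exact absurd (Nat.le_of_dvd hpos hn) (by omega)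

/-- Dirichlet's box principle: for two of `r = 0, …, R ^ (|ι| - 1)`, the points
`(r * (e j - e i₀) % n)_{j ≠ i₀}` fall into the same box of side `n / R + 1`. -/
theorem exists_pos_le_pow_modEq_abs_le {ι : Type*} [Fintype ι] [DecidableEq ι] (e : ι → ℤ)
    (i₀ : ι) {n R : ℕ} (hn : 0 < n) (hR : 0 < R) :
    ∃ r : ℕ, 0 < r ∧ r ≤ R ^ (Fintype.card ι - 1) ∧ ∃ s : ι → ℤ, s i₀ = 0 ∧
      ∀ j, s j ≡ r * (e j - e i₀) [ZMOD n] ∧ |s j| ≤ (n / R : ℕ) := by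
  set w : ℤ := (n / R : ℕ) + 1
  have hw : 0 < w := by positivity
  have hnw : (n : ℤ) ≤ R * w := by
    have := Nat.lt_mul_div_succ n hR
    push_cast [w]
    exact_mod_cast this.le
  let box : ℕ → {j // j ≠ i₀} → ℤ := fun r j => r * (e j - e i₀) % n / w
  have hbox : Set.MapsTo box (range (R ^ (Fintype.card ι - 1) + 1))
      (Fintype.piFinset fun _ : {j // j ≠ i₀} => Ico 0 (R : ℤ) : Finset _) := fun r _ => by
    simp only [mem_coe, Fintype.mem_piFinset, mem_Ico]
    intro j
    have := Int.emod_lt_of_pos (r * (e j - e i₀)) (by omega : (0 : ℤ) < n)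
    exact ⟨Int.ediv_nonneg (Int.emod_nonneg _ (by omega)) hw.le,
      (Int.ediv_lt_iff_lt_mul hw).2 (by linarith)⟩
  have hcard : #(Fintype.piFinset fun _ : {j // j ≠ i₀} => Ico 0 (R : ℤ)) <
      #(range (R ^ (Fintype.card ι - 1) + 1)) := by
    simp [Fintype.card_subtype_compl]
  obtain ⟨r₁, hr₁, r₂, hr₂, hne, heq⟩ := exists_ne_map_eq_of_card_lt_of_maps_to hcard hbox
  wlog hlt : r₂ < r₁ generalizing r₁ r₂
  · exact this r₂ hr₂ r₁ hr₁ hne.symm heq.symm (by omega)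
  refine ⟨r₁ - r₂, by omega, by simp at hr₁; omega,
    fun j => r₁ * (e j - e i₀) % n - r₂ * (e j - e i₀) % n, by simp, fun j => ⟨?_, ?_⟩⟩
  · convert (Int.mod_modEq _ _).sub (Int.mod_modEq _ _) using 1
    push_cast [Nat.cast_sub hlt.le]
    ring
  · by_cases hj : j = i₀
    · simp [hj, Int.ediv_nonneg]
    · exact Int.lt_add_one_iff.mp (Int.abs_sub_lt_of_ediv_eq hw (congrFun heq ⟨j, hj⟩))

theorem card_le_of_forall_card_filter_mul_pow_mem_le {G : Type*} [Group G] [Fintype G]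
    [DecidableEq G] (X : Finset G) (r m : ℕ) (h : ∀ c : G, #{y | c * y ^ r ∈ X} ≤ m) :
    #X ≤ m := by
  have hshift : ∀ y : G, #{c | c * y ^ r ∈ X} = #X := fun y =>
    card_equiv (Equiv.mulRight (y ^ r)) (by simp)
  have hcount : Fintype.card G * #X ≤ Fintype.card G * m :=
    calc Fintype.card G * #X = ∑ y : G, #{c | c * y ^ r ∈ X} := by simp [hshift]
      _ = ∑ c : G, #{y | c * y ^ r ∈ X} := by simp only [card_filter]; exact sum_comm
      _ ≤ ∑ _c : G, m := sum_le_sum fun c _ => h c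
      _ = Fintype.card G * m := by simp
  exact Nat.le_of_mul_le_mul_left hcount Fintype.card_pos

theorem card_le_of_forall_sum_mul_pow_eq_zero {K ι : Type*} [Field K] [Fintype ι]
    (b : ι → K) (u : ι → ℕ) {i₀ : ι} (hb : b i₀ ≠ 0) (hu : ∀ j ≠ i₀, u j ≠ u i₀) {L : ℕ}
    (hL : ∀ j, u j ≤ L) {Z : Finset K} (hZ : ∀ y ∈ Z, ∑ j, b j * y ^ u j = 0) : #Z ≤ L := by
  classical
  set P : K[X] := ∑ j, monomial (u j) (b j)
  have hcoeff : P.coeff (u i₀) = b i₀ := by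
    rw [finsetSum_coeff, sum_eq_single i₀ (fun j _ hj => coeff_monomial_of_ne _ (hu j hj).symm)
      (by simp), coeff_monomial_same]
  have hP : P ≠ 0 := fun h => hb (by rw [← hcoeff, h, coeff_zero])
  calc #Z ≤ P.natDegree := card_le_degree_of_subset_roots fun y hy => by
        simpa [mem_roots hP, P, eval_finsetSum] using hZ y hy
    _ ≤ L := natDegree_sum_le_of_forall_le _ _ fun j _ => (natDegree_monomial_le _).trans (hL j)

section FiniteField

variable {F : Type*} [Field F] [Fintype F] [DecidableEq F] {ι : Type*} [Fintype ι]

def lacunaryZeros (a : ι → F) (t : ι → ℕ) : Finset Fˣ :=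
  {x | ∑ i, a i * (x : F) ^ t i = 0}

theorem ncard_setOf_ne_zero_and_eq_zero (a : ι → F) (t : ι → ℕ) :
    {x : F | x ≠ 0 ∧ ∑ i, a i * x ^ t i = 0}.ncard = #(lacunaryZeros a t) := by
  rw [← Set.ncard_coe_finset, ← Set.ncard_image_of_injective _ Units.val_injective]
  congr 1
  ext x
  simp only [ne_eq, Set.mem_ofPred_eq, coe_filter, mem_univ, true_and, Set.mem_image,
    lacunaryZeros]
  exact ⟨fun ⟨hx, h⟩ => ⟨Units.mk0 x hx, h, rfl⟩, fun ⟨u, h, hu⟩ => hu ▸ ⟨u.ne_zero, h⟩⟩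

theorem card_lacunaryZeros_le_of_modEq (a : ι → F) (t : ι → ℕ) {i₀ : ι} (ha : a i₀ ≠ 0)
    (r : ℕ) (u : ι → ℕ) (m : ℤ) (hmod : ∀ j, (u j : ℤ) ≡ r * t j + m [ZMOD Fintype.card Fˣ])
    (hu : ∀ j ≠ i₀, u j ≠ u i₀) {L : ℕ} (hL : ∀ j, u j ≤ L) : #(lacunaryZeros a t) ≤ L := by
  refine card_le_of_forall_card_filter_mul_pow_mem_le _ r L fun c => ?_
  rw [← card_map ⟨Units.val, Units.val_injective⟩]
  refine card_le_of_forall_sum_mul_pow_eq_zero (fun j => a j * (c : F) ^ t j) u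
    (mul_ne_zero ha (pow_ne_zero _ c.ne_zero)) hu hL fun y hy => ?_
  obtain ⟨y, hmem, rfl⟩ := mem_map.1 hy
  have hzero : ∑ j, a j * ((c * y ^ r : Fˣ) : F) ^ t j = 0 := by
    simpa [lacunaryZeros] using hmem
  have hpow : ∀ j, (c * y ^ r) ^ t j = c ^ t j * y ^ u j * y ^ (-m) := fun j => by
    rw [← zpow_natCast y (u j), ← zpow_mod_card, hmod j, zpow_mod_card, mul_assoc, ← zpow_add,
      add_neg_cancel_right, zpow_mul, zpow_natCast, zpow_natCast, mul_pow]
  have hfactor : (∑ j, a j * (c : F) ^ t j * (y : F) ^ u j) * ((y ^ (-m) : Fˣ) : F) = 0 := by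
    rw [← hzero, sum_mul]
    refine sum_congr rfl fun j _ => ?_
    rw [← Units.val_pow_eq_pow_val (c * y ^ r), hpow]
    simp only [Units.val_mul, Units.val_pow_eq_pow_val]
    ring
  exact (mul_eq_zero.1 hfactor).resolve_right (Units.ne_zero _)

theorem card_lacunaryZeros_le_two_mul_div [DecidableEq ι] (a : ι → F) (t : ι → ℕ) {i₀ : ι}
    (ha : a i₀ ≠ 0) {D : ℕ} (hD : ∀ j ≠ i₀, Int.gcd ((t j : ℤ) - t i₀) (Fintype.card Fˣ) ≤ D)
    {R : ℕ} (hR : 0 < R) (hRD : R ^ (Fintype.card ι - 1) * D < Fintype.card Fˣ) :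
    #(lacunaryZeros a t) ≤ 2 * (Fintype.card Fˣ / R) := by
  set M := Fintype.card Fˣ / R
  obtain ⟨r, hr, hrR, s, hs₀, hs⟩ :=
    exists_pos_le_pow_modEq_abs_le (fun j => (t j : ℤ)) i₀ (Fintype.card_pos (α := Fˣ)) hR
  have hsM : ∀ j, -(M : ℤ) ≤ s j ∧ s j ≤ M := fun j => abs_le.1 (hs j).2
  have hs_ne : ∀ j ≠ i₀, s j ≠ 0 := fun j hj h0 =>
    not_natCast_dvd_mul_of_mul_gcd_lt hr ((Nat.mul_le_mul hrR (hD j hj)).trans_lt hRD)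
      (by simpa [h0] using (hs j).1.dvd)
  refine card_lacunaryZeros_le_of_modEq a t ha r (fun j => (s j + M).toNat) (M - r * t i₀)
    (fun j => ?_) (fun j hj => ?_) (fun j => ?_)
  · rw [Int.toNat_of_nonneg (by linarith [hsM j])]
    convert (hs j).1.add_right (M : ℤ) using 1
    ring
  · have := hs_ne j hj
    have := hsM j
    omega
  · have := hsM j
    omega

theorem card_lacunaryZeros_le_of_gcd_le [DecidableEq ι] {k : ℕ} (hk : 1 ≤ k)
    (hι : Fintype.card ι = k + 1) (a : ι → F) (t : ι → ℕ) {i₀ : ι} (ha : a i₀ ≠ 0) {D : ℕ}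
    (hD : ∀ j ≠ i₀, Int.gcd ((t j : ℤ) - t i₀) (Fintype.card Fˣ) ≤ D) :
    (#(lacunaryZeros a t) : ℝ) ≤
      2 * (Fintype.card Fˣ : ℝ) ^ (1 - 1 / (k : ℝ)) * (D : ℝ) ^ (1 / (k : ℝ)) +
        4 * (Fintype.card Fˣ : ℝ) ^ (1 - 2 / (k : ℝ)) * (D : ℝ) ^ (2 / (k : ℝ)) := by
  set n := Fintype.card Fˣ
  have hn : (0 : ℝ) < n := by exact_mod_cast Fintype.card_pos
  have hD0 : (0 : ℝ) < D := by
    have : Nontrivial ι := Fintype.one_lt_card_iff_nontrivial.1 (by omega)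
    obtain ⟨j, hj⟩ := exists_ne i₀
    exact_mod_cast (Int.gcd_pos_of_ne_zero_right _ (by exact_mod_cast hn.ne')).trans_le (hD j hj)
  set B := ((n : ℝ) / D) ^ (1 / (k : ℝ))
  have hB : 0 < B := by positivity
  have hBk : B ^ k = n / D := by
    simp only [B, one_div]
    exact Real.rpow_inv_natCast_pow (by positivity) (by omega)
  have hB2 : B ^ 2 = ((n : ℝ) / D) ^ (2 / (k : ℝ)) := by
    rw [← Real.rpow_natCast, ← Real.rpow_mul (by positivity)]
    ring_nf
  have hbound : (#(lacunaryZeros a t) : ℝ) ≤ 2 * n / B + 4 * n / B ^ 2 := by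
    refine le_two_mul_div_add_four_mul_div_sq hn.le hB (by exact_mod_cast card_le_univ _)
      fun R hR hRB => ?_
    have hRD : R ^ (Fintype.card ι - 1) * D < n := by
      rw [hι, Nat.add_sub_cancel]
      have : (R : ℝ) ^ k < n / D := hBk ▸ pow_lt_pow_left₀ hRB R.cast_nonneg (by omega)
      rw [lt_div_iff₀ hD0] at this
      exact_mod_cast this
    calc (#(lacunaryZeros a t) : ℝ) ≤ 2 * (n / R : ℕ) := by
          exact_mod_cast card_lacunaryZeros_le_two_mul_div a t ha hD hR hRD
      _ ≤ 2 * n / R := by rw [mul_div_assoc]; gcongr; exact Nat.cast_div_le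
  rw [mul_div_assoc, mul_div_assoc, hB2, Real.div_div_rpow hn hD0.le,
    Real.div_div_rpow hn hD0.le] at hbound
  linarith

theorem card_lacunaryZeros_le [DecidableEq ι] {k : ℕ} (hk : 1 ≤ k)
    (hι : Fintype.card ι = k + 1) (a : ι → F) (t : ι → ℕ) {i₀ : ι} (ha : a i₀ ≠ 0) {D : ℕ}
    (hD : ∀ j ≠ i₀, Int.gcd ((t j : ℤ) - t i₀) ((Fintype.card F : ℤ) - 1) ≤ D) :
    (#(lacunaryZeros a t) : ℝ) ≤
      2 * (Fintype.card F : ℝ) ^ (1 - 1 / (k : ℝ)) * (D : ℝ) ^ (1 / (k : ℝ)) +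
        8 * (Fintype.card F : ℝ) ^ (1 - 2 / (k : ℝ)) * (D : ℝ) ^ (2 / (k : ℝ)) := by
  set q := Fintype.card F
  have hq : 1 < q := Fintype.one_lt_card
  have hn : Fintype.card Fˣ = q - 1 := Fintype.card_units F
  have hbound := card_lacunaryZeros_le_of_gcd_le hk hι a t ha (D := D) fun j hj => by
    rw [hn, Nat.cast_pred (by omega)]
    exact hD j hj
  have hk' : (1 : ℝ) ≤ k := by exact_mod_cast hk
  have hn' : (Fintype.card Fˣ : ℝ) = q - 1 := by rw [hn, Nat.cast_pred (by omega)]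
  have hq' : (2 : ℝ) ≤ q := by exact_mod_cast hq
  have h₁ : (Fintype.card Fˣ : ℝ) ^ (1 - 1 / (k : ℝ)) ≤ (q : ℝ) ^ (1 - 1 / (k : ℝ)) :=
    Real.rpow_le_rpow (by positivity) (by linarith)
      (by rw [sub_nonneg, div_le_one (by positivity)]; exact hk')
  have h₂ : (Fintype.card Fˣ : ℝ) ^ (1 - 2 / (k : ℝ)) ≤ 2 * (q : ℝ) ^ (1 - 2 / (k : ℝ)) :=
    Real.rpow_le_two_mul_rpow (by rw [hn']; linarith) (by linarith) (by linarith)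
      (by linarith [div_le_self zero_le_two hk'])
  nlinarith [mul_le_mul_of_nonneg_right h₁ (Real.rpow_nonneg D.cast_nonneg (1 / (k : ℝ))),
    mul_le_mul_of_nonneg_right h₂ (Real.rpow_nonneg D.cast_nonneg (2 / (k : ℝ)))]

end FiniteField

/-- For fixed `k ≥ 1` there is a constant `C_k > 0` such that for every prime `p`,
coefficients `a_0, …, a_k ∈ F_p^*` and exponents `0 = t_0 < t_1 < ⋯ < t_k < p`,
the number `Q` of solutions `x ∈ F_p^*` of `∑ a_i x^{t_i} = 0` satisfies
`Q ≤ 2 p^{1-1/k} D^{1/k} + C_k p^{1-2/k} D^{2/k}`, where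
`D = min_i max_{j ≠ i} gcd(t_j - t_i, p - 1)`. -/
theorem card_zeros_lacunary_bound (k : ℕ) (hk : 1 ≤ k) :
    ∃ C : ℝ, 0 < C ∧
      ∀ (p : ℕ), p.Prime →
        ∀ (a : Fin (k + 1) → ZMod p), (∀ i, a i ≠ 0) →
          ∀ (t : Fin (k + 1) → ℕ), t 0 = 0 → StrictMono t → t (Fin.last k) < p →
            (Set.ncard {x : ZMod p | x ≠ 0 ∧ ∑ i : Fin (k + 1), a i * x ^ t i = 0} : ℝ) ≤
              2 * (p : ℝ) ^ (1 - 1 / (k : ℝ)) *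
                  ((Finset.univ.inf' Finset.univ_nonempty fun i : Fin (k + 1) =>
                    (Finset.univ.erase i).sup fun j : Fin (k + 1) =>
                      Int.gcd ((t j : ℤ) - (t i : ℤ)) ((p : ℤ) - 1) : ℕ) : ℝ) ^ (1 / (k : ℝ)) +
                C * (p : ℝ) ^ (1 - 2 / (k : ℝ)) *
                  ((Finset.univ.inf' Finset.univ_nonempty fun i : Fin (k + 1) =>
                    (Finset.univ.erase i).sup fun j : Fin (k + 1) =>
                      Int.gcd ((t j : ℤ) - (t i : ℤ)) ((p : ℤ) - 1) : ℕ) : ℝ) ^ (2 / (k : ℝ)) := by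
  refine ⟨8, by norm_num, fun p hp a ha t _ _ _ => ?_⟩
  have := Fact.mk hp
  obtain ⟨i₀, -, hi₀⟩ := exists_mem_eq_inf' univ_nonempty fun i : Fin (k + 1) =>
    (univ.erase i).sup fun j => Int.gcd ((t j : ℤ) - t i) ((p : ℤ) - 1)
  rw [hi₀, ncard_setOf_ne_zero_and_eq_zero]
  have hbound := card_lacunaryZeros_le hk (Fintype.card_fin _) a t (ha i₀) fun j hj => by
    rw [ZMod.card]
    exact le_sup (f := fun j => Int.gcd ((t j : ℤ) - t i₀) ((p : ℤ) - 1))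
      (mem_erase.2 ⟨hj, mem_univ j⟩)
  rwa [ZMod.card] at hbound
end

section
/- Let p be a prime, k ≥ 1 an integer, a_0, a_1, …, a_k ∈ F_p^*, and let t_0 = 0 < t_1 < … < t_k < p be integers. Let F(X) = a_0 + a_1·X^{t_1} + … + a_k·X^{t_k} ∈ F_p[X]. Then for every element ρ of the algebraic closure of F_p, the multiplicity of ρ as a root of F (viewing F in the polynomial ring over the algebraic closure) is at most k. -/
/-!
Induct on `k`. For `F = ∑ aᵢ X^{tᵢ}`, the operator `F ↦ t_k F - X F'` kills the top monomial and
multiplies `aᵢ X^{tᵢ}` by `t_k - tᵢ`, which is nonzero in characteristic `p` because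
`0 < t_k - tᵢ < p`; so it produces a polynomial of the same shape with one term fewer. A root of
multiplicity `m` of `F` is a root of multiplicity at least `m - 1` of `t_k F - X F'`, hence
`m - 1 ≤ k - 1` by induction.
-/

open Polynomial

namespace Polynomial

section CommRing

variable {R : Type*} [CommRing R]

theorem rootMultiplicity_sub_one_le_rootMultiplicity_C_mul_sub_X_mul_derivative
    (c : R) (f : R[X]) (ρ : R) (hne : C c * f - X * derivative f ≠ 0) :
    f.rootMultiplicity ρ - 1 ≤ (C c * f - X * derivative f).rootMultiplicity ρ := by
  have hdvd := f.pow_rootMultiplicity_dvd ρ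
  rw [le_rootMultiplicity_iff hne]
  exact dvd_sub (((pow_dvd_pow _ (Nat.sub_le _ 1)).trans hdvd).mul_left _)
    ((pow_sub_one_dvd_derivative_of_pow_dvd hdvd).mul_left _)

theorem X_mul_derivative_C_mul_X_pow (a : R) (n : ℕ) :
    X * derivative (C a * X ^ n) = C (a * n) * X ^ n := by
  cases n with
  | zero => simp
  | succ n => rw [derivative_C_mul_X_pow, Nat.add_sub_cancel, pow_succ]; ring

variable {ι : Type*} [Fintype ι]

theorem C_mul_sub_X_mul_derivative_sum_C_mul_X_pow (c : R) (a : ι → R) (t : ι → ℕ) :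
    C c * (∑ i, C (a i) * X ^ t i) - X * derivative (∑ i, C (a i) * X ^ t i) =
      ∑ i, C ((c - t i) * a i) * X ^ t i := by
  simp only [Finset.mul_sum, derivative_sum, X_mul_derivative_C_mul_X_pow,
    ← Finset.sum_sub_distrib]
  refine Finset.sum_congr rfl fun i _ => ?_
  simp only [C_mul, C_sub]
  ring

theorem coeff_sum_C_mul_X_pow (a : ι → R) {t : ι → ℕ} (ht : Function.Injective t) (j : ι) :
    (∑ i, C (a i) * X ^ t i).coeff (t j) = a j := by
  rw [finsetSum_coeff, Finset.sum_eq_single j (fun i _ hij => ?_) (by simp)]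
  · simp
  · rw [coeff_C_mul_X_pow, if_neg (ht.ne hij).symm]

theorem sum_C_mul_X_pow_ne_zero {a : ι → R} {t : ι → ℕ} (ht : Function.Injective t) {j : ι}
    (hj : a j ≠ 0) : ∑ i, C (a i) * X ^ t i ≠ 0 := fun h =>
  hj <| by rw [← coeff_sum_C_mul_X_pow a ht j, h, coeff_zero]

end CommRing

theorem rootMultiplicity_sum_C_mul_X_pow_le {R : Type*} [CommRing R] [IsDomain R] (p : ℕ)
    [CharP R p] {k : ℕ} (a : Fin (k + 1) → R) (ha : ∀ i, a i ≠ 0) (t : Fin (k + 1) → ℕ)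
    (ht0 : t 0 = 0) (ht : StrictMono t) (htp : t (Fin.last k) < p) (ρ : R) :
    (∑ i, C (a i) * X ^ t i).rootMultiplicity ρ ≤ k := by
  induction k with
  | zero => simp [ht0, rootMultiplicity_C]
  | succ n ih =>
    set F := ∑ i, C (a i) * X ^ t i
    set b : Fin (n + 1) → R := fun i => ((t (Fin.last _) : R) - t i.castSucc) * a i.castSucc
    have hH : C (t (Fin.last _) : R) * F - X * derivative F =
        ∑ i, C (b i) * X ^ t i.castSucc := by
      rw [C_mul_sub_X_mul_derivative_sum_C_mul_X_pow, Fin.sum_univ_castSucc, sub_self, zero_mul,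
        C_0, zero_mul, add_zero]
    have htlt_last (i : Fin (n + 1)) : t i.castSucc < t (Fin.last _) :=
      ht (Fin.castSucc_lt_last i)
    have hb (i : Fin (n + 1)) : b i ≠ 0 := by
      have hcast : (t i.castSucc : R) ≠ t (Fin.last _) := fun h => (htlt_last i).ne <|
        CharP.natCast_injOn_Iio R p ((htlt_last i).trans htp) htp h
      exact mul_ne_zero (sub_ne_zero.2 hcast.symm) (ha _)
    have ht' : StrictMono fun i : Fin (n + 1) => t i.castSucc := ht.comp Fin.strictMono_castSucc
    have hHle := ih b hb _ ht0 ht' ((htlt_last _).trans htp)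
    have hmle := rootMultiplicity_sub_one_le_rootMultiplicity_C_mul_sub_X_mul_derivative
      (t (Fin.last _) : R) F ρ (hH ▸ sum_C_mul_X_pow_ne_zero ht'.injective (hb 0))
    rw [hH] at hmle
    omega

end Polynomial

theorem rootMultiplicity_lacunary_le_general
    (p : ℕ) [Fact p.Prime] (k : ℕ)
    (a : Fin (k + 1) → ZMod p) (ha : ∀ i, a i ≠ 0)
    (t : Fin (k + 1) → ℕ) (ht0 : t 0 = 0) (htmono : StrictMono t)
    (htp : t (Fin.last k) < p)
    (ρ : AlgebraicClosure (ZMod p)) :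
    ((∑ i : Fin (k + 1), C (a i) * X ^ t i).map
        (algebraMap (ZMod p) (AlgebraicClosure (ZMod p)))).rootMultiplicity ρ ≤ k := by
  simpa [Polynomial.map_sum] using rootMultiplicity_sum_C_mul_X_pow_le p
    (fun i => algebraMap (ZMod p) (AlgebraicClosure (ZMod p)) (a i)) (by simpa using ha)
    t ht0 htmono htp ρ

/-- Over `F_p`, any root (in the algebraic closure of `F_p`) of a lacunary
polynomial `a_0 + a_1 X^{t_1} + ⋯ + a_k X^{t_k}` with nonzero coefficients and
exponents `0 = t_0 < t_1 < ⋯ < t_k < p` has multiplicity at most `k`. -/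
theorem rootMultiplicity_lacunary_le
    (p : ℕ) [Fact p.Prime] (k : ℕ) (hk : 1 ≤ k)
    (a : Fin (k + 1) → ZMod p) (ha : ∀ i, a i ≠ 0)
    (t : Fin (k + 1) → ℕ) (ht0 : t 0 = 0) (htmono : StrictMono t)
    (htp : t (Fin.last k) < p)
    (ρ : AlgebraicClosure (ZMod p)) :
    ((∑ i : Fin (k + 1), C (a i) * X ^ t i).map
        (algebraMap (ZMod p) (AlgebraicClosure (ZMod p)))).rootMultiplicity ρ ≤ k :=
  rootMultiplicity_lacunary_le_general p k a ha t ht0 htmono htp ρ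
end

section
/- Let G be a finite simple graph on n vertices with minimum degree at least 1 (i.e., G has no isolated vertices). Then G has a dominating set S with |S| ≤ n/2, i.e., there exists a set S of vertices with cardinality at most n/2 such that every vertex of G either lies in S or is adjacent to some vertex of S. -/
/-! A minimal dominating set `S` of a graph without isolated vertices has a dominating
complement: if some `v ∈ S` had no neighbour outside `S`, then `S \ {v}` would still dominate,
since `v` is dominated by one of its neighbours, all of which lie in `S`. Hence `S` or `Sᶜ` has at
most `n / 2` vertices. -/

namespace SimpleGraph

variable {V : Type*} (G : SimpleGraph V)

def IsDominating (S : Set V) : Prop :=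
  ∀ v, v ∈ S ∨ ∃ u ∈ S, G.Adj v u

variable {G}

lemma isDominating_univ : G.IsDominating Set.univ :=
  fun _ ↦ .inl trivial

lemma IsDominating.diff_singleton {S : Set V} (hS : G.IsDominating S) {v u : V} (hvu : G.Adj v u)
    (hnbrs : ∀ w, G.Adj v w → w ∈ S) : G.IsDominating (S \ {v}) := by
  intro w
  by_cases hwv : w = v
  · subst hwv
    exact .inr ⟨u, ⟨hnbrs u hvu, hvu.ne.symm⟩, hvu⟩
  rcases hS w with hw | ⟨x, hx, hwx⟩
  · exact .inl ⟨hw, hwv⟩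
  by_cases hxv : x = v
  · subst hxv
    exact .inl ⟨hnbrs w hwx.symm, hwv⟩
  · exact .inr ⟨x, ⟨hx, hxv⟩, hwx⟩

lemma isDominating_compl_of_minimal {S : Set V} (hS : Minimal G.IsDominating S)
    (hG : ∀ v, ∃ u, G.Adj v u) : G.IsDominating Sᶜ := by
  intro v
  by_contra! ⟨hvS, hvSc⟩
  obtain ⟨u, hvu⟩ := hG v
  have hnbrs : ∀ w, G.Adj v w → w ∈ S := fun w hvw ↦ by_contra fun hw ↦ hvSc w hw hvw
  exact hS.not_prop_of_ssubset (Set.sdiff_singleton_ssubset.2 (not_not.1 hvS))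
    (hS.prop.diff_singleton hvu hnbrs)

lemma exists_isDominating_two_mul_ncard_le [Finite V] (hG : ∀ v, ∃ u, G.Adj v u) :
    ∃ S, G.IsDominating S ∧ 2 * S.ncard ≤ Nat.card V := by
  obtain ⟨S, hS⟩ := exists_minimal_of_wellFoundedLT G.IsDominating ⟨_, isDominating_univ⟩
  have hcard := S.ncard_add_ncard_compl
  by_cases h : 2 * S.ncard ≤ Nat.card V
  · exact ⟨S, hS.prop, h⟩
  · exact ⟨Sᶜ, isDominating_compl_of_minimal hS hG, by omega⟩

end SimpleGraph

/-- Ore's theorem: a finite simple graph on `n` vertices with minimum degree at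
least 1 (no isolated vertices) has a dominating set of cardinality at most `n/2`. -/
theorem exists_dominating_set_card_le_half
    {V : Type*} [Fintype V] (G : SimpleGraph V)
    (hmin : ∀ v : V, ∃ u : V, G.Adj v u) :
    ∃ S : Finset V, (S.card : ℝ) ≤ (Fintype.card V : ℝ) / 2 ∧
      ∀ v : V, v ∈ S ∨ ∃ u ∈ S, G.Adj v u := by
  classical
  obtain ⟨S, hS, hcard⟩ := G.exists_isDominating_two_mul_ncard_le hmin
  refine ⟨S.toFinset, ?_, fun v ↦ by simpa using hS v⟩
  rw [← Set.ncard_eq_toFinset_card', ← Nat.card_eq_fintype_card, le_div_iff₀' two_pos]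
  exact_mod_cast hcard
end

section
/- Let p be a prime, k ≥ 1 an integer, a_0, a_1, …, a_k ∈ F_p^*, and let 1 ≤ t_1 < … < t_k < p be integers. Suppose the polynomial F(X) = a_0 + a_1·X^{t_1} + … + a_k·X^{t_k} ∈ F_p[X] splits completely over F_p (i.e., is a product of linear factors in F_p[X]). Then the number of distinct x ∈ F_p^* with F(x) = 0 is at least t_k / k. -/
/-!
Write `θ = X · d/dX`, so that `θ^[j] F = ∑ aᵢ tᵢ^j X^{tᵢ}`. If `(X - x)^{k+1}` divided `F`, then
`(X - x)` would divide `θ^[j] F` for all `j ≤ k`, giving `∑ aᵢ x^{tᵢ} tᵢ^j = 0` for `j = 0, …, k`.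
The `tᵢ` are distinct in `F_p` because `tᵢ < p`, so this Vandermonde system forces `aᵢ x^{tᵢ} = 0`,
which fails for `i = 0`. Hence every root has multiplicity at most `k`; as `F` splits, its
`t_k` roots counted with multiplicity lie in at most `k` copies of its set of distinct roots,
none of which is `0` since `F(0) = a_0`.
-/

open Polynomial

theorem Multiset.card_le_card_toFinset_mul {α : Type*} [DecidableEq α] (s : Multiset α) {k : ℕ}
    (hcount : ∀ x ∈ s, s.count x ≤ k) : card s ≤ s.toFinset.card * k := by
  rw [← toFinset_sum_count_eq]
  exact Finset.sum_le_card_nsmul _ _ _ fun x hx => hcount x (mem_toFinset.mp hx)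

namespace Polynomial

section EulerOperator

variable {R : Type*} [CommSemiring R]

noncomputable def eulerOperator (f : R[X]) : R[X] := X * derivative f

theorem eulerOperator_iterate_sum_C_mul_X_pow {ι : Type*} (s : Finset ι) (a : ι → R)
    (t : ι → ℕ) (j : ℕ) :
    eulerOperator^[j] (∑ i ∈ s, C (a i) * X ^ t i) = ∑ i ∈ s, C (a i * (t i : R) ^ j) * X ^ t i := by
  induction j with
  | zero => simp
  | succ j ih =>
    rw [Function.iterate_succ_apply', ih, eulerOperator, derivative_sum, Finset.mul_sum]
    refine Finset.sum_congr rfl fun i _ => ?_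
    rw [derivative_C_mul_X_pow]
    rcases Nat.eq_zero_or_pos (t i) with h | h
    · simp [h]
    · rw [mul_left_comm, ← pow_succ', Nat.sub_add_cancel h]
      simp only [pow_succ, C_mul]
      ring

theorem pow_sub_dvd_eulerOperator_iterate {q f : R[X]} {m : ℕ} (h : q ^ m ∣ f) (j : ℕ) :
    q ^ (m - j) ∣ eulerOperator^[j] f := by
  induction j with
  | zero => simpa using h
  | succ j ih =>
    rw [Function.iterate_succ_apply', ← Nat.sub_sub]
    exact (pow_sub_one_dvd_derivative_of_pow_dvd ih).mul_left X

end EulerOperator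

theorem coeff_sum_C_mul_X_pow_of_injective {R ι : Type*} [Semiring R] [Fintype ι] (a : ι → R)
    {t : ι → ℕ} (ht : Function.Injective t) (j : ι) :
    (∑ i, C (a i) * X ^ t i).coeff (t j) = a j := by
  rw [finsetSum_coeff, Finset.sum_eq_single j]
  · simp
  · intro i _ hij
    rw [coeff_C_mul, coeff_X_pow, if_neg fun h => hij (ht h.symm), mul_zero]
  · simp

theorem rootMultiplicity_sum_C_mul_X_pow_lt {R : Type*} [CommRing R] [IsDomain R] {n : ℕ}
    (a : Fin n → R) {t : Fin n → ℕ} (ht : Function.Injective fun i => (t i : R)) {x : R}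
    {i₀ : Fin n} (hx : a i₀ * x ^ t i₀ ≠ 0) :
    rootMultiplicity x (∑ i, C (a i) * X ^ t i) < n := by
  by_contra! hn
  have hdvd : (X - C x) ^ n ∣ ∑ i, C (a i) * X ^ t i :=
    (pow_dvd_pow _ hn).trans (pow_rootMultiplicity_dvd _ x)
  have hsystem (j : Fin n) : ∑ i, a i * x ^ t i * (t i : R) ^ (j : ℕ) = 0 := by
    have hroot : (X - C x) ∣ eulerOperator^[j] (∑ i, C (a i) * X ^ t i) :=
      (dvd_pow_self _ (by omega)).trans (pow_sub_dvd_eulerOperator_iterate hdvd j)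
    have := dvd_iff_isRoot.mp hroot
    rw [eulerOperator_iterate_sum_C_mul_X_pow, IsRoot.def] at this
    simp only [eval_finsetSum, eval_mul, eval_C, eval_pow, eval_X] at this
    simpa only [mul_right_comm] using this
  exact hx (congrFun (Matrix.eq_zero_of_forall_pow_sum_mul_pow_eq_zero ht hsystem) i₀)

theorem setOf_ne_zero_and_eval_eq_zero_eq_roots_toFinset {R : Type*} [CommRing R] [IsDomain R]
    [DecidableEq R] {f : R[X]} (hf : f.eval 0 ≠ 0) : {x | x ≠ 0 ∧ f.eval x = 0} = (f.roots.toFinset : Set R) := by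
  have hf0 : f ≠ 0 := by rintro rfl; simp at hf
  ext x
  simp only [Set.mem_ofPred_eq, Finset.mem_coe, Multiset.mem_toFinset, mem_roots hf0, IsRoot.def,
    and_iff_right_iff_imp]
  rintro hx rfl
  exact hf hx

end Polynomial

theorem ZMod.natCast_injective_of_lt {p : ℕ} {ι : Type*} {t : ι → ℕ} (ht : Function.Injective t)
    (htp : ∀ i, t i < p) : Function.Injective fun i => (t i : ZMod p) := by
  intro i j hij
  have := congrArg ZMod.val hij
  simp only [ZMod.val_cast_of_lt (htp _)] at this
  exact ht this

theorem card_roots_of_splits_lacunary_general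
    (p : ℕ) [Fact p.Prime] (k : ℕ)
    (a : Fin (k + 1) → ZMod p) (ha : ∀ i, a i ≠ 0)
    (t : Fin (k + 1) → ℕ) (ht0 : t 0 = 0) (htmono : StrictMono t)
    (htp : t (Fin.last k) < p)
    (hsplit : Splits ((∑ i : Fin (k + 1), C (a i) * X ^ t i).map (RingHom.id (ZMod p)))) :
    (t (Fin.last k) : ℝ) / k ≤
      Set.ncard {x : ZMod p | x ≠ 0 ∧
        (∑ i : Fin (k + 1), C (a i) * X ^ t i).eval x = 0} := by
  classical
  set F : (ZMod p)[X] := ∑ i : Fin (k + 1), C (a i) * X ^ t i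
  have hcoeff := coeff_sum_C_mul_X_pow_of_injective a htmono.injective
  have hF0 : F.eval 0 ≠ 0 := by rw [← coeff_zero_eq_eval_zero, ← ht0, hcoeff]; exact ha 0
  have hmult (x : ZMod p) : F.roots.count x ≤ k := by
    rw [count_roots, ← Nat.lt_succ_iff]
    refine rootMultiplicity_sum_C_mul_X_pow_lt a ?_ (i₀ := 0) (by simpa [ht0] using ha 0)
    exact ZMod.natCast_injective_of_lt htmono.injective fun i =>
      (htmono.monotone (Fin.le_last i)).trans_lt htp
  have hdeg : t (Fin.last k) ≤ F.roots.toFinset.card * k :=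
    calc t (Fin.last k) ≤ F.natDegree := le_natDegree_of_ne_zero (by rw [hcoeff]; exact ha _)
      _ = Multiset.card F.roots := (by simpa using hsplit : Splits F).natDegree_eq_card_roots
      _ ≤ F.roots.toFinset.card * k := F.roots.card_le_card_toFinset_mul fun x _ => hmult x
  rw [setOf_ne_zero_and_eval_eq_zero_eq_roots_toFinset hF0, Set.ncard_coe_finset]
  exact div_le_of_le_mul₀ (Nat.cast_nonneg _) (Nat.cast_nonneg _) (by exact_mod_cast hdeg)

/-- If a lacunary polynomial `F(X) = a_0 + a_1 X^{t_1} + ⋯ + a_k X^{t_k}` over `F_p`,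
with all `a_i ∈ F_p^*` and exponents `1 ≤ t_1 < ⋯ < t_k < p`, splits completely over
`F_p`, then it has at least `t_k / k` distinct roots in `F_p^*`. -/
theorem card_roots_of_splits_lacunary
    (p : ℕ) [Fact p.Prime] (k : ℕ) (hk : 1 ≤ k)
    (a : Fin (k + 1) → ZMod p) (ha : ∀ i, a i ≠ 0)
    (t : Fin (k + 1) → ℕ) (ht0 : t 0 = 0) (htmono : StrictMono t)
    (htp : t (Fin.last k) < p)
    (hsplit : Splits ((∑ i : Fin (k + 1), C (a i) * X ^ t i).map (RingHom.id (ZMod p)))) :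
    (t (Fin.last k) : ℝ) / k ≤
      Set.ncard {x : ZMod p | x ≠ 0 ∧
        (∑ i : Fin (k + 1), C (a i) * X ^ t i).eval x = 0} :=
  card_roots_of_splits_lacunary_general p k a ha t ht0 htmono htp hsplit
end

section
/- Fix an integer k ≥ 1. There exists a constant c = c(k) > 0 such that the following holds. Let p be a prime, a_0, a_1, …, a_k ∈ F_p^*, and 1 ≤ t_1 < … < t_k < p integers, and suppose the polynomial F(X) = a_0 + a_1·X^{t_1} + … + a_k·X^{t_k} ∈ F_p[X] splits completely over F_p. Then, setting t_0 = 0 and D = min over i ∈ {0,…,k} of (max over j ≠ i of gcd(t_j − t_i, p−1)), one has D ≥ c · t_k^{k} · p^{−(k−1)}. -/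
/-!
Write `F = ∑ aᵢ X^{tᵢ}`. Applying `X · d/dX` repeatedly shows that at a root `x` of multiplicity
`r` one has `∑ aᵢ P(tᵢ) x^{tᵢ} = 0` for every `P` of degree `< r`; with
`P = ∏_{j ≠ i} (X - tⱼ)` (the `tⱼ` are distinct mod `p`) this bounds the multiplicity of nonzero
roots by `k`. As `F` splits, `t_k ≤ k Q`, where `Q` counts the roots in `F_p^*` of
`∑ aᵢ x^{tᵢ - t_{i₁}}` for an index `i₁` realising `D`.

For a sparse `∑ cᵢ x^{σᵢ}` with `k + 1` terms, `σ_{i₁} = 0` and `c_{i₁} ≠ 0`, the bound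
`Q^k ≪ D p^{k-1}` goes by induction on `k`. There are `(p-1) Q^k` pairs
`(x, z) ∈ F_p^* × (F_p^*)^k` with every `x zᵣ` a root, i.e. with `(cᵢ x^{σᵢ})ᵢ` orthogonal to every
row `(zᵣ^{σᵢ})ᵢ`. If the `k` rows are independent in `F_p^{k+1}`, they determine that vector (its
`i₁`-coordinate is `c_{i₁}`), hence `x^{σⱼ}`, so at most `D (p-1)^k` pairs are of this kind.
Otherwise some row lies in the span `W` of the others, and a vector of `W^⊥` with a vanishing
coordinate is a sparse polynomial with `k` terms vanishing at that `zᵣ`; by induction this leaves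
`N` choices of `zᵣ`, with `N^{k-1} ≪ D p^{k-2}`. Hence `Q^k ≤ D (p-1)^{k-1} + k Q^{k-1} N`.
-/

open Polynomial Finset Module

theorem card_filter_zpow_eq_le {G : Type*} [CommGroup G] [Fintype G] [DecidableEq G]
    [IsCyclic G] (n : ℤ) (c : G) : #{x | x ^ n = c} ≤ Int.gcd n (Fintype.card G) := by
  obtain h | ⟨x₀, hx₀⟩ := (univ.filter fun x : G => x ^ n = c).eq_empty_or_nonempty
  · simp [h]
  have hx₀ : x₀ ^ n = c := (mem_filter.1 hx₀).2
  have hg : 0 < Int.gcd n (Fintype.card G) := Int.gcd_pos_of_ne_zero_right _ (by simp)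
  refine (card_le_card_of_injOn (· * x₀⁻¹) ?_ (mul_left_injective x₀⁻¹).injOn).trans
    (IsCyclic.card_pow_eq_one_le hg)
  intro x hx
  have hx : (x * x₀⁻¹) ^ n = 1 := by
    rw [mul_zpow, _root_.inv_zpow, (mem_filter.1 hx).2, hx₀, mul_inv_cancel]
  have hnat : (x * x₀⁻¹) ^ n.natAbs = 1 := by
    rcases n.natAbs_eq with h | h <;> rw [h] at hx <;> simpa using hx
  simp only [coe_filter, mem_univ, true_and]
  exact pow_gcd_eq_one.2 ⟨hnat, pow_card_eq_one⟩

theorem pow_succ_le_of_le_add_pow_mul {Q A b s : ℕ} (h : Q ^ (s + 1) ≤ A + Q ^ s * b) :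
    Q ^ (s + 1) ≤ 2 * A + (2 * b) ^ (s + 1) := by
  rcases le_or_gt Q (2 * b) with hQ | hQ
  · exact (Nat.pow_le_pow_left hQ _).trans (Nat.le_add_left _ _)
  · have : 2 * (Q ^ s * b) ≤ Q ^ (s + 1) :=
      calc 2 * (Q ^ s * b) = Q ^ s * (2 * b) := by ring
        _ ≤ Q ^ s * Q := Nat.mul_le_mul_left _ hQ.le
        _ = Q ^ (s + 1) := (pow_succ _ _).symm
    omega

theorem card_subtype_ne_add_one {ι : Type*} [Fintype ι] [DecidableEq ι] (j : ι) :
    Fintype.card {i // i ≠ j} + 1 = Fintype.card ι := by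
  have := Fintype.card_pos_iff.2 ⟨j⟩
  simp only [ne_eq, Fintype.card_subtype_compl, Fintype.card_unique]
  omega

theorem exists_forall_ne_le_inf'_sup_erase {ι : Type*} [Fintype ι] [Nonempty ι] [DecidableEq ι]
    (f : ι → ι → ℕ) :
    ∃ i, ∀ j ≠ i, f i j ≤ univ.inf' univ_nonempty fun i => (univ.erase i).sup (f i) := by
  obtain ⟨i, -, hi⟩ := exists_mem_eq_inf' univ_nonempty fun i => (univ.erase i).sup (f i)
  exact ⟨i, fun j hj => hi ▸ le_sup (mem_erase.2 ⟨hj, mem_univ j⟩)⟩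

section LinearAlgebra

variable {K ι κ : Type*} [Field K] [Fintype ι] [Fintype κ]

theorem card_le_finrank_ker_mulVecLin_add (A : Matrix κ ι K) :
    Fintype.card ι ≤ finrank K (LinearMap.ker A.mulVecLin) + Fintype.card κ := by
  have h := LinearMap.finrank_range_add_finrank_ker A.mulVecLin
  rw [← Matrix.rank, finrank_fintype_fun_eq_card] at h
  have := A.rank_le_card_height
  omega

theorem finrank_ker_mulVecLin_add_card {A : Matrix κ ι K} (hA : LinearIndependent K A.row) :
    finrank K (LinearMap.ker A.mulVecLin) + Fintype.card κ = Fintype.card ι := by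
  have := LinearMap.finrank_range_add_finrank_ker A.mulVecLin
  rw [← Matrix.rank, hA.rank_matrix, finrank_fintype_fun_eq_card] at this
  omega

theorem dotProduct_eq_zero_of_mem_span_row {A : Matrix κ ι K} {u : ι → K}
    (hu : u ∈ LinearMap.ker A.mulVecLin) {w : ι → K}
    (hw : w ∈ Submodule.span K (Set.range A.row)) : w ⬝ᵥ u = 0 := by
  rw [← range_vecMulLinear] at hw
  obtain ⟨y, rfl⟩ := hw
  rw [Matrix.vecMulLinear_apply, ← Matrix.dotProduct_mulVec, show A.mulVec u = 0 from hu,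
    dotProduct_zero]

theorem eq_of_mem_of_finrank_le_one {P : Submodule K (ι → K)} (hP : finrank K P ≤ 1)
    {u v : ι → K} (hu : u ∈ P) (hv : v ∈ P) {i : ι} (hi : u i ≠ 0) (huv : u i = v i) :
    u = v := by
  obtain ⟨w, hw⟩ := finrank_le_one_iff.1 hP
  obtain ⟨a, ha⟩ := hw ⟨u, hu⟩
  obtain ⟨b, hb⟩ := hw ⟨v, hv⟩
  have ha' : a • (w : ι → K) = u := congrArg Subtype.val ha
  have hb' : b • (w : ι → K) = v := congrArg Subtype.val hb
  subst ha' hb'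
  simp only [Pi.smul_apply, smul_eq_mul] at huv hi
  rw [mul_right_cancel₀ (right_ne_zero_of_mul hi) huv]

theorem exists_mem_apply_eq_one_and_apply_eq_zero {P : Submodule K (ι → K)}
    (hP : 2 ≤ finrank K P) {u : ι → K} (hu : u ∈ P) {i : ι} (hi : u i ≠ 0) :
    ∃ e ∈ P, e i = 1 ∧ ∃ j ≠ i, e j = 0 := by
  set π : P →ₗ[K] K := (LinearMap.proj i).comp P.subtype
  have hker : LinearMap.ker π ≠ ⊥ := by
    intro h
    have h1 := LinearMap.finrank_range_add_finrank_ker π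
    have h2 := Submodule.finrank_le (LinearMap.range π)
    rw [h, finrank_bot, Module.finrank_self] at *
    omega
  obtain ⟨⟨w, hwP⟩, hwπ, hw0⟩ := Submodule.exists_mem_ne_zero_of_ne_bot hker
  have hwi : w i = 0 := hwπ
  obtain ⟨j, hj⟩ : ∃ j, w j ≠ 0 := by
    by_contra! h
    exact hw0 (Subtype.ext (funext h))
  refine ⟨(u i)⁻¹ • (u - (u j / w j) • w), P.smul_mem _ (P.sub_mem hu (P.smul_mem _ hwP)),
    ?_, j, fun h => hj (h ▸ hwi), ?_⟩
  · simp [hwi, hi]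
  · simp [hj]

end LinearAlgebra

section PowVec

variable {K ι : Type*} [Field K]

def powVec (σ : ι → ℤ) (x : Kˣ) : ι → K := fun i => ((x ^ σ i : Kˣ) : K)

variable {σ : ι → ℤ} {i₀ : ι}

theorem powVec_mul (σ : ι → ℤ) (x y : Kˣ) : powVec σ (x * y) = powVec σ x * powVec σ y := by
  ext i
  simp [powVec, mul_zpow]

theorem powVec_apply_of_eq_zero (hσ : σ i₀ = 0) (x : Kˣ) : powVec σ x i₀ = 1 := by
  simp [powVec, hσ]

theorem powVec_dotProduct_mul [Fintype ι] (c : ι → K) (σ : ι → ℤ) (x z : Kˣ) :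
    powVec σ z ⬝ᵥ (c * powVec σ x) = c ⬝ᵥ powVec σ (x * z) := by
  simp only [dotProduct, powVec_mul, Pi.mul_apply]
  exact sum_congr rfl fun i _ => by ring

end PowVec

section SparseRoots

variable {K ι : Type*} [Field K] [Fintype K] [DecidableEq K] [Fintype ι]

def sparseRoots (c : ι → K) (σ : ι → ℤ) : Finset Kˣ := {x | c ⬝ᵥ powVec σ x = 0}

variable {c : ι → K} {σ : ι → ℤ} {i₀ : ι}

theorem mem_sparseRoots {x : Kˣ} : x ∈ sparseRoots c σ ↔ c ⬝ᵥ powVec σ x = 0 := by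
  simp [sparseRoots]

theorem exists_ne_and_ne_zero_of_mem_sparseRoots (hσ : σ i₀ = 0) (hc : c i₀ ≠ 0) {x : Kˣ}
    (hx : x ∈ sparseRoots c σ) : ∃ j ≠ i₀, c j ≠ 0 := by
  by_contra! h
  rw [mem_sparseRoots, dotProduct, sum_eq_single i₀ (fun j _ hj => by rw [h j hj, zero_mul])
    (by simp), powVec_apply_of_eq_zero hσ, mul_one] at hx
  exact hc hx

theorem sparseRoots_eq_empty_of_subsingleton [Subsingleton ι] (hσ : σ i₀ = 0)
    (hc : c i₀ ≠ 0) : sparseRoots c σ = ∅ :=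
  eq_empty_of_forall_notMem fun _ hx =>
    let ⟨_, hj, _⟩ := exists_ne_and_ne_zero_of_mem_sparseRoots hσ hc hx
    hj (Subsingleton.elim _ _)

theorem sparseRoots_subtype_ne [DecidableEq ι] {j : ι} (hj : c j = 0) :
    sparseRoots (fun i : {i // i ≠ j} => c i) (fun i => σ i) = sparseRoots c σ := by
  ext x
  simp only [mem_sparseRoots, dotProduct, powVec]
  rw [← sum_subtype (univ.erase j) (by simp) fun i => c i * ((x ^ σ i : Kˣ) : K),
    sum_erase _ (by rw [hj, zero_mul])]

def rootTuples (c : ι → K) (σ : ι → ℤ) (m : ℕ) : Finset (Kˣ × (Fin m → Kˣ)) :=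
  {xz | ∀ r, xz.1 * xz.2 r ∈ sparseRoots c σ}

theorem card_rootTuples (c : ι → K) (σ : ι → ℤ) (m : ℕ) :
    #(rootTuples c σ m) = Fintype.card Kˣ * #(sparseRoots c σ) ^ m := by
  have : #(rootTuples c σ m) = #(univ ×ˢ Fintype.piFinset fun _ : Fin m => sparseRoots c σ) :=
    card_nbij' (fun xz => (xz.1, fun r => xz.1 * xz.2 r))
      (fun xy => (xy.1, fun r => xy.1⁻¹ * xy.2 r))
      (fun xz hxz => by simpa [rootTuples] using hxz)
      (fun xy hxy => by simpa [rootTuples] using hxy)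
      (fun xz _ => by simp) (fun xy _ => by simp)
  rw [this, card_product, Fintype.card_piFinset, prod_const, card_univ, card_univ,
    Fintype.card_fin]

theorem mem_ker_iff_forall_mul_mem_sparseRoots {m : ℕ} (z : Fin m → Kˣ) (x : Kˣ) :
    c * powVec σ x ∈ LinearMap.ker (Matrix.of (powVec σ ∘ z)).mulVecLin ↔
      ∀ r, x * z r ∈ sparseRoots c σ := by
  simp only [LinearMap.mem_ker, Matrix.mulVecLin_apply, funext_iff, mem_sparseRoots,
    ← powVec_dotProduct_mul]
  rfl

theorem card_filter_forall_mul_mem_sparseRoots_le {s E : ℕ} (hcard : Fintype.card ι = s + 2)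
    (hσ : σ i₀ = 0) (hc : c i₀ ≠ 0) {j : ι} (hcj : c j ≠ 0)
    (hgcd : Int.gcd (σ j) (Fintype.card Kˣ) ≤ E) {z : Fin (s + 1) → Kˣ}
    (hz : LinearIndependent K (powVec σ ∘ z)) :
    #{x | ∀ r, x * z r ∈ sparseRoots c σ} ≤ E := by
  obtain h | ⟨x₁, hx₁⟩ :=
    (univ.filter fun x : Kˣ => ∀ r, x * z r ∈ sparseRoots c σ).eq_empty_or_nonempty
  · simp [h]
  set A := Matrix.of (powVec σ ∘ z)
  have hP : finrank K (LinearMap.ker A.mulVecLin) ≤ 1 := by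
    have := finrank_ker_mulVecLin_add_card (A := A) hz
    rw [hcard, Fintype.card_fin] at this
    omega
  have hx₁ := (mem_ker_iff_forall_mul_mem_sparseRoots z x₁).2 (mem_filter.1 hx₁).2
  refine (card_le_card fun x hx => ?_).trans
    ((card_filter_zpow_eq_le (σ j) (x₁ ^ σ j)).trans hgcd)
  have hx := (mem_ker_iff_forall_mul_mem_sparseRoots z x).2 (mem_filter.1 hx).2
  have heq := eq_of_mem_of_finrank_le_one hP hx hx₁ (i := i₀)
    (by simp [powVec_apply_of_eq_zero hσ, hc]) (by simp [powVec_apply_of_eq_zero hσ])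
  have hj := congrFun heq j
  simp only [Pi.mul_apply, powVec] at hj
  simp only [mem_filter, mem_univ, true_and]
  exact Units.ext (mul_left_cancel₀ hcj hj)

open Classical in
theorem card_filter_linearIndependent_le {s E : ℕ} (hcard : Fintype.card ι = s + 2)
    (hσ : σ i₀ = 0) (hc : c i₀ ≠ 0) {j : ι} (hcj : c j ≠ 0)
    (hgcd : Int.gcd (σ j) (Fintype.card Kˣ) ≤ E) :
    #{xz ∈ rootTuples c σ (s + 1) | LinearIndependent K (powVec σ ∘ xz.2)}
      ≤ E * Fintype.card Kˣ ^ (s + 1) := by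
  refine (card_le_mul_card_image_of_maps_to (f := Prod.snd) (t := univ)
    (fun _ _ => mem_univ _) E fun z _ => ?_).trans (by simp)
  obtain h | ⟨xz, hxz⟩ := ({xz ∈ {xz ∈ rootTuples c σ (s + 1) |
    LinearIndependent K (powVec σ ∘ xz.2)} | xz.2 = z}).eq_empty_or_nonempty
  · simp [h]
  simp only [mem_filter] at hxz
  obtain ⟨⟨-, hz⟩, rfl⟩ := hxz
  refine (card_le_card_of_injOn Prod.fst (fun yz hyz => ?_) fun yz hyz yz' hyz' h => ?_).trans
    (card_filter_forall_mul_mem_sparseRoots_le hcard hσ hc hcj hgcd hz)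
  · simp only [mem_coe, rootTuples, mem_filter, mem_univ, true_and] at hyz ⊢
    exact hyz.2 ▸ hyz.1.1
  · simp only [mem_coe, mem_filter] at hyz hyz'
    exact Prod.ext h (hyz.2.trans hyz'.2.symm)

open Classical in
theorem card_filter_mem_span_le {s N : ℕ} (hcard : Fintype.card ι = s + 2)
    (hσ : σ i₀ = 0) (hc : c i₀ ≠ 0)
    (hN : ∀ e : ι → K, e i₀ = 1 → ∀ j ≠ i₀, e j = 0 → #(sparseRoots e σ) ≤ N)
    {x : Kˣ} {g : Fin s → Kˣ} (hxg : (x, g) ∈ rootTuples c σ s) :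
    #{w | powVec σ w ∈ Submodule.span K (Set.range (powVec σ ∘ g))} ≤ N := by
  set A := Matrix.of (powVec σ ∘ g)
  have hP : 2 ≤ finrank K (LinearMap.ker A.mulVecLin) := by
    have := card_le_finrank_ker_mulVecLin_add A
    rw [hcard, Fintype.card_fin] at this
    omega
  have hx := (mem_ker_iff_forall_mul_mem_sparseRoots g x).2 (by simpa [rootTuples] using hxg)
  obtain ⟨e, he, he₀, j, hj, hej⟩ := exists_mem_apply_eq_one_and_apply_eq_zero hP hx (i := i₀)
    (by simp [powVec_apply_of_eq_zero hσ, hc])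
  refine (card_le_card fun w hw => ?_).trans (hN e he₀ j hj hej)
  rw [mem_sparseRoots, dotProduct_comm]
  exact dotProduct_eq_zero_of_mem_span_row he (mem_filter.1 hw).2

open Classical in
theorem card_filter_mem_span_succAbove_le {s N : ℕ} (hcard : Fintype.card ι = s + 2)
    (hσ : σ i₀ = 0) (hc : c i₀ ≠ 0)
    (hN : ∀ e : ι → K, e i₀ = 1 → ∀ j ≠ i₀, e j = 0 → #(sparseRoots e σ) ≤ N)
    (r₀ : Fin (s + 1)) :
    #{xz ∈ rootTuples c σ (s + 1) |
        powVec σ (xz.2 r₀) ∈ Submodule.span K (Set.range (powVec σ ∘ xz.2 ∘ r₀.succAbove))}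
      ≤ N * #(rootTuples c σ s) := by
  refine card_le_mul_card_image_of_maps_to (f := fun xz => (xz.1, xz.2 ∘ r₀.succAbove))
    (fun xz hxz => ?_) N fun xg hxg => ?_
  · simp only [rootTuples, mem_filter, mem_univ, true_and] at hxz ⊢
    exact fun r => hxz.1 _
  refine (card_le_card_of_injOn (fun xz => xz.2 r₀) (fun xz hxz => ?_)
    fun xz hxz xz' hxz' h => ?_).trans (card_filter_mem_span_le hcard hσ hc hN hxg)
  · simp only [mem_coe, mem_filter, mem_univ, true_and] at hxz ⊢
    exact hxz.2 ▸ hxz.1.2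
  · simp only [mem_coe, mem_filter] at hxz hxz'
    have h₂ : xz.2 ∘ r₀.succAbove = xz'.2 ∘ r₀.succAbove :=
      (congrArg Prod.snd hxz.2).trans (congrArg Prod.snd hxz'.2).symm
    refine Prod.ext ((congrArg Prod.fst hxz.2).trans (congrArg Prod.fst hxz'.2).symm) ?_
    funext r
    rcases Fin.eq_self_or_eq_succAbove r₀ r with rfl | ⟨r, rfl⟩
    · exact h
    · exact congrFun h₂ r

theorem pow_card_sparseRoots_succ_le {s E N : ℕ} (hcard : Fintype.card ι = s + 2)
    (hσ : σ i₀ = 0) (hc : c i₀ ≠ 0) (hgcd : ∀ j ≠ i₀, Int.gcd (σ j) (Fintype.card Kˣ) ≤ E)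
    (hN : ∀ e : ι → K, e i₀ = 1 → ∀ j ≠ i₀, e j = 0 → #(sparseRoots e σ) ≤ N) :
    #(sparseRoots c σ) ^ (s + 1)
      ≤ 2 * (E * Fintype.card Kˣ ^ s) + (2 * ((s + 1) * N)) ^ (s + 1) := by
  classical
  set n := Fintype.card Kˣ
  set Q := #(sparseRoots c σ)
  obtain hQ | ⟨x, hx⟩ := (sparseRoots c σ).eq_empty_or_nonempty
  · simp [Q, hQ]
  obtain ⟨j, hj, hcj⟩ := exists_ne_and_ne_zero_of_mem_sparseRoots hσ hc hx
  have hcover : rootTuples c σ (s + 1) ⊆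
      {xz ∈ rootTuples c σ (s + 1) | LinearIndependent K (powVec σ ∘ xz.2)} ∪
        univ.biUnion fun r₀ => {xz ∈ rootTuples c σ (s + 1) | powVec σ (xz.2 r₀) ∈
          Submodule.span K (Set.range (powVec σ ∘ xz.2 ∘ r₀.succAbove))} := by
    intro xz hxz
    by_cases hli : LinearIndependent K (powVec σ ∘ xz.2)
    · exact mem_union_left _ (mem_filter.2 ⟨hxz, hli⟩)
    obtain ⟨r₀, hr₀⟩ := not_forall_not.1 (mt linearIndependent_iff_notMem_span.2 hli)
    rw [← Set.compl_eq_univ_sdiff, ← Fin.range_succAbove, ← Set.range_comp] at hr₀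
    exact mem_union_right _ (mem_biUnion.2 ⟨r₀, mem_univ _, mem_filter.2 ⟨hxz, hr₀⟩⟩)
  have hcount : n * Q ^ (s + 1) ≤ n * (E * n ^ s + Q ^ s * ((s + 1) * N)) :=
    calc n * Q ^ (s + 1) = #(rootTuples c σ (s + 1)) := (card_rootTuples c σ _).symm
      _ ≤ E * n ^ (s + 1) + ∑ _r₀ : Fin (s + 1), N * (n * Q ^ s) := by
        refine (card_le_card hcover).trans ((card_union_le _ _).trans (add_le_add
          (card_filter_linearIndependent_le hcard hσ hc hcj (hgcd j hj))
          (card_biUnion_le.trans (sum_le_sum fun r₀ _ => ?_))))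
        rw [← card_rootTuples]
        exact card_filter_mem_span_succAbove_le hcard hσ hc hN r₀
      _ = n * (E * n ^ s + Q ^ s * ((s + 1) * N)) := by
        rw [sum_const, card_univ, Fintype.card_fin, smul_eq_mul]
        ring
  exact pow_succ_le_of_le_add_pow_mul (Nat.le_of_mul_le_mul_left hcount Fintype.card_pos)

end SparseRoots

def sparseRootBound : ℕ → ℕ
  | 0 => 0
  | s + 1 => 2 + (2 * (s + 1)) ^ (s + 1) * sparseRootBound s

theorem pow_card_sparseRoots_le {K : Type*} [Field K] [Fintype K] [DecidableEq K] {s : ℕ}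
    (hs : 1 ≤ s) {ι : Type*} [Fintype ι] [DecidableEq ι] (hcard : Fintype.card ι = s + 1)
    {c : ι → K} {σ : ι → ℤ} {i₀ : ι} (hσ : σ i₀ = 0) (hc : c i₀ ≠ 0) {E : ℕ}
    (hgcd : ∀ j ≠ i₀, Int.gcd (σ j) (Fintype.card Kˣ) ≤ E) :
    #(sparseRoots c σ) ^ s ≤ sparseRootBound s * E * Fintype.card Kˣ ^ (s - 1) := by
  induction s, hs using Nat.le_induction generalizing ι with
  | base =>
    have := pow_card_sparseRoots_succ_le (N := 0) hcard hσ hc hgcd fun e he₀ j hj hej => by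
      have : Subsingleton {i // i ≠ j} :=
        Fintype.card_le_one_iff_subsingleton.1 (by have := card_subtype_ne_add_one j; omega)
      rw [← sparseRoots_subtype_ne hej,
        sparseRoots_eq_empty_of_subsingleton (i₀ := ⟨i₀, hj.symm⟩) hσ (by simp [he₀])]
      rfl
    simpa [sparseRootBound, mul_comm] using this
  | succ s hs ih =>
    set n := Fintype.card Kˣ
    set B := sparseRootBound s * E * n ^ (s - 1)
    set N := Nat.findGreatest (fun m => m ^ s ≤ B) n
    have hN : ∀ e : ι → K, e i₀ = 1 → ∀ j ≠ i₀, e j = 0 → #(sparseRoots e σ) ≤ N := by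
      intro e he₀ j hj hej
      rw [← sparseRoots_subtype_ne hej]
      refine Nat.le_findGreatest (card_le_univ _) (ih (by have := card_subtype_ne_add_one j; omega)
        (i₀ := ⟨i₀, hj.symm⟩) hσ (by simp [he₀]) fun j' hj' => hgcd _ ?_)
      exact fun h => hj' (Subtype.ext h)
    have hNB : N ^ s ≤ B :=
      Nat.findGreatest_spec (P := fun m => m ^ s ≤ B) (Nat.zero_le n)
        (by rw [zero_pow (by omega)]; exact Nat.zero_le _)
    have hNn : N ≤ n := Nat.findGreatest_le _
    refine (pow_card_sparseRoots_succ_le hcard hσ hc hgcd hN).trans ?_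
    calc 2 * (E * n ^ (s + 1 - 1)) + (2 * ((s + 1) * N)) ^ (s + 1)
        = 2 * (E * n ^ s) + (2 * (s + 1)) ^ (s + 1) * (N ^ s * N) := by
          rw [Nat.add_sub_cancel, mul_pow, mul_pow, mul_pow, pow_succ N]
          ring
      _ ≤ 2 * (E * n ^ s) + (2 * (s + 1)) ^ (s + 1) * (B * n) := by gcongr
      _ = sparseRootBound (s + 1) * E * n ^ (s + 1 - 1) := by
        rw [Nat.add_sub_cancel, sparseRootBound]
        obtain ⟨s, rfl⟩ := Nat.exists_eq_add_of_le' hs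
        simp only [B, Nat.add_sub_cancel]
        ring

section Lacunary

variable {R ι : Type*} [CommRing R] [Fintype ι]

theorem iterate_X_mul_derivative_sum (b : ι → R) (t : ι → ℕ) (m : ℕ) :
    (fun q : R[X] => X * derivative q)^[m] (∑ i, C (b i) * X ^ t i)
      = ∑ i, C (b i * (t i : R) ^ m) * X ^ t i := by
  induction m with
  | zero => simp
  | succ m ih =>
    rw [Function.iterate_succ_apply', ih, derivative_sum, mul_sum]
    refine sum_congr rfl fun i _ => ?_
    rw [derivative_C_mul_X_pow]
    rcases Nat.eq_zero_or_pos (t i) with h | h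
    · simp [h]
    · rw [← mul_assoc, mul_comm X, mul_assoc, ← pow_succ', Nat.sub_add_cancel h, pow_succ,
        mul_assoc]

theorem pow_sub_dvd_iterate_X_mul_derivative {p q : R[X]} {r : ℕ} (m : ℕ) (h : q ^ r ∣ p) :
    q ^ (r - m) ∣ (fun q : R[X] => X * derivative q)^[m] p := by
  induction m with
  | zero => simpa
  | succ m ih =>
    rw [Nat.sub_succ, Function.iterate_succ_apply']
    exact (pow_sub_one_dvd_derivative_of_pow_dvd ih).mul_left X

theorem sum_mul_eval_mul_pow_eq_zero_of_dvd (b : ι → R) (t : ι → ℕ) {x : R} {r : ℕ}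
    (h : (X - C x) ^ r ∣ ∑ i, C (b i) * X ^ t i) {P : R[X]} (hP : P.natDegree < r) :
    ∑ i, b i * P.eval (t i : R) * x ^ t i = 0 := by
  have hmoment (m : ℕ) (hm : m < r) : ∑ i, b i * (t i : R) ^ m * x ^ t i = 0 := by
    have hdvd := (dvd_pow_self (X - C x) (Nat.sub_ne_zero_of_lt hm)).trans
      (pow_sub_dvd_iterate_X_mul_derivative m h)
    rw [iterate_X_mul_derivative_sum, dvd_iff_isRoot, IsRoot, eval_finsetSum] at hdvd
    simpa using hdvd
  simp_rw [eval_eq_sum_range, mul_sum, sum_mul]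
  rw [sum_comm]
  refine sum_eq_zero fun m hm => ?_
  calc _ = P.coeff m * ∑ i, b i * (t i : R) ^ m * x ^ t i :=
        by rw [mul_sum]; exact sum_congr rfl fun i _ => by ring
    _ = 0 := by rw [hmoment m (by rw [mem_range] at hm; omega), mul_zero]

theorem le_natDegree_sum_C_mul_X_pow (a : ι → R) {t : ι → ℕ}
    (ht : Function.Injective t) {i : ι} (ha : a i ≠ 0) :
    t i ≤ (∑ j, C (a j) * X ^ t j).natDegree := by
  refine le_natDegree_of_ne_zero ?_
  rw [finsetSum_coeff, sum_eq_single i (fun j _ hj => by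
    rw [coeff_C_mul_X_pow, if_neg (ht.ne hj).symm]) (by simp), coeff_C_mul_X_pow, if_pos rfl]
  exact ha

end Lacunary

section FiniteField

variable {K ι : Type*} [Field K] [Fintype ι]

theorem not_pow_card_dvd_sum_C_mul_X_pow [DecidableEq ι] (a : ι → K) (t : ι → ℕ)
    (ht : Function.Injective fun i => (t i : K)) {i : ι} (ha : a i ≠ 0) {x : K} (hx : x ≠ 0) :
    ¬ (X - C x) ^ Fintype.card ι ∣ ∑ i, C (a i) * X ^ t i := by
  intro h
  set P : K[X] := ∏ j ∈ univ.erase i, (X - C (t j : K))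
  have hP : P.natDegree < Fintype.card ι := by
    rw [natDegree_finsetProd_X_sub_C_eq_card, card_erase_of_mem (mem_univ i), card_univ]
    exact Nat.sub_lt (Fintype.card_pos_iff.2 ⟨i⟩) one_pos
  have := sum_mul_eval_mul_pow_eq_zero_of_dvd a t h hP
  rw [sum_eq_single i (fun j _ hj => by
    rw [eval_prod, prod_eq_zero (mem_erase.2 ⟨hj, mem_univ j⟩) (by simp), mul_zero, zero_mul])
    (by simp)] at this
  refine mul_ne_zero (mul_ne_zero ha ?_) (pow_ne_zero _ hx) this
  rw [eval_prod, prod_ne_zero_iff]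
  intro j hj
  simpa [sub_eq_zero] using ht.ne (mem_erase.1 hj).1.symm

variable [Fintype K] [DecidableEq K]

theorem mem_sparseRoots_sub_iff_isRoot (a : ι → K) (t : ι → ℕ) (m : ℤ) (u : Kˣ) :
    u ∈ sparseRoots a (fun i => (t i : ℤ) - m) ↔ (∑ i, C (a i) * X ^ t i).IsRoot (u : K) := by
  have : a ⬝ᵥ powVec (fun i => (t i : ℤ) - m) u
      = ((u ^ m)⁻¹ : Kˣ) * (∑ i, C (a i) * X ^ t i).eval (u : K) := by
    simp only [dotProduct, powVec, eval_finsetSum, eval_mul, eval_C, eval_pow, eval_X, mul_sum]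
    refine sum_congr rfl fun i _ => ?_
    rw [zpow_sub, zpow_natCast, Units.val_mul, Units.val_pow_eq_pow_val]
    ring
  rw [mem_sparseRoots, this, IsRoot, Units.mul_right_eq_zero]

theorem natDegree_pow_le_of_splits [DecidableEq ι] {k : ℕ} (hk : 1 ≤ k)
    (hcard : Fintype.card ι = k + 1) {a : ι → K} (ha : ∀ i, a i ≠ 0) {t : ι → ℕ}
    (ht : Function.Injective fun i => (t i : K)) {i₀ : ι} (ht₀ : t i₀ = 0)
    (hsplit : Splits (∑ i, C (a i) * X ^ t i)) (i₁ : ι) {E : ℕ}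
    (hE : ∀ j ≠ i₁, Int.gcd ((t j : ℤ) - t i₁) (Fintype.card Kˣ) ≤ E) :
    (∑ i, C (a i) * X ^ t i).natDegree ^ k
      ≤ k ^ k * sparseRootBound k * E * Fintype.card Kˣ ^ (k - 1) := by
  set F := ∑ i, C (a i) * X ^ t i
  have hF₀ : F.eval 0 ≠ 0 := by
    rw [eval_finsetSum, sum_eq_single i₀ (fun j _ hj => by
      rw [eval_mul, eval_pow, eval_X, zero_pow fun h => hj (ht (by simp [h, ht₀])), mul_zero])
      (by simp)]
    simpa [ht₀] using ha i₀
  have hroot_ne {x : K} (hx : x ∈ F.roots) : x ≠ 0 := by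
    rintro rfl
    exact hF₀ (isRoot_of_mem_roots hx)
  have hmult {x : K} (hx : x ∈ F.roots) : F.roots.count x ≤ k := by
    rw [count_roots]
    by_contra! h
    rw [Order.add_one_le_iff.symm, le_rootMultiplicity_iff (ne_zero_of_mem_roots hx), ← hcard] at h
    exact not_pow_card_dvd_sum_C_mul_X_pow a t ht (ha i₀) (hroot_ne hx) h
  have hdeg : F.natDegree ≤ k * #F.roots.toFinset := by
    rw [← splits_iff_card_roots.1 hsplit, ← Multiset.toFinset_sum_count_eq, mul_comm,
      ← smul_eq_mul]
    exact sum_le_card_nsmul _ _ _ fun x hx => hmult (Multiset.mem_toFinset.1 hx)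
  have hroots : #F.roots.toFinset ≤ #(sparseRoots a fun i => (t i : ℤ) - t i₁) := by
    refine (card_le_card fun x hx => ?_).trans (card_image_le (f := Units.val))
    have hx := Multiset.mem_toFinset.1 hx
    exact mem_image.2 ⟨Units.mk0 x (hroot_ne hx),
      (mem_sparseRoots_sub_iff_isRoot a t _ _).2 (isRoot_of_mem_roots hx), rfl⟩
  have hQ := pow_card_sparseRoots_le hk hcard (c := a) (i₀ := i₁) (by simp) (ha i₁) hE
  calc F.natDegree ^ k ≤ (k * #(sparseRoots a fun i => (t i : ℤ) - t i₁)) ^ k :=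
        Nat.pow_le_pow_left (hdeg.trans (Nat.mul_le_mul_left k hroots)) k
    _ ≤ k ^ k * (sparseRootBound k * E * Fintype.card Kˣ ^ (k - 1)) := by
        rw [mul_pow]; exact Nat.mul_le_mul_left _ hQ
    _ = k ^ k * sparseRootBound k * E * Fintype.card Kˣ ^ (k - 1) := by ring

end FiniteField

theorem pow_last_le_of_splits {p : ℕ} [hp : Fact p.Prime] {k : ℕ} (hk : 1 ≤ k)
    {a : Fin (k + 1) → ZMod p} (ha : ∀ i, a i ≠ 0) {t : Fin (k + 1) → ℕ} (ht₀ : t 0 = 0)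
    (htm : StrictMono t) (htp : t (Fin.last k) < p) (hsplit : Splits (∑ i, C (a i) * X ^ t i))
    (i₁ : Fin (k + 1)) {E : ℕ} (hE : ∀ j ≠ i₁, Int.gcd ((t j : ℤ) - t i₁) ((p : ℤ) - 1) ≤ E) :
    t (Fin.last k) ^ k ≤ k ^ k * sparseRootBound k * E * p ^ (k - 1) := by
  have ht : Function.Injective fun i => (t i : ZMod p) := fun i j h => htm.injective <| by
    have hlt (i : Fin (k + 1)) : t i < p := (htm.monotone (Fin.le_last i)).trans_lt htp
    simpa [ZMod.natCast_eq_natCast_iff', Nat.mod_eq_of_lt (hlt _)] using h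
  have hE' : ∀ j ≠ i₁, Int.gcd ((t j : ℤ) - t i₁) (Fintype.card (ZMod p)ˣ) ≤ E := by
    rwa [ZMod.card_units, Nat.cast_sub hp.out.one_le, Nat.cast_one]
  calc t (Fin.last k) ^ k ≤ (∑ i, C (a i) * X ^ t i).natDegree ^ k :=
        Nat.pow_le_pow_left (le_natDegree_sum_C_mul_X_pow a htm.injective (ha _)) k
    _ ≤ k ^ k * sparseRootBound k * E * (p - 1) ^ (k - 1) := by
        simpa only [ZMod.card_units] using
          natDegree_pow_le_of_splits hk (Fintype.card_fin _) ha ht ht₀ hsplit i₁ hE'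
    _ ≤ k ^ k * sparseRootBound k * E * p ^ (k - 1) := by gcongr; omega

/-- For fixed `k ≥ 1` there is a constant `c = c(k) > 0` such that whenever a
lacunary polynomial `a_0 + a_1 X^{t_1} + ⋯ + a_k X^{t_k}` over `F_p` (with all
`a_i ∈ F_p^*` and `0 = t_0 < t_1 < ⋯ < t_k < p`) splits completely over `F_p`,
the quantity `D = min_i max_{j ≠ i} gcd(t_j - t_i, p-1)` satisfies
`D ≥ c · t_k^k · p^{-(k-1)}`. -/
theorem D_lower_bound_of_splits (k : ℕ) (hk : 1 ≤ k) :
    ∃ c : ℝ, 0 < c ∧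
      ∀ (p : ℕ) [Fact p.Prime],
        ∀ (a : Fin (k + 1) → ZMod p), (∀ i, a i ≠ 0) →
          ∀ (t : Fin (k + 1) → ℕ), t 0 = 0 → StrictMono t → t (Fin.last k) < p →
            Splits (∑ i : Fin (k + 1), C (a i) * X ^ t i) →
              c * (t (Fin.last k) : ℝ) ^ k * (p : ℝ) ^ (-((k : ℝ) - 1)) ≤
                ((Finset.univ.inf' Finset.univ_nonempty fun i : Fin (k + 1) =>
                  (Finset.univ.erase i).sup fun j : Fin (k + 1) =>
                    Int.gcd ((t j : ℤ) - (t i : ℤ)) ((p : ℤ) - 1) : ℕ) : ℝ) := by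
  have hB : 0 < sparseRootBound k := by
    obtain ⟨k, rfl⟩ := Nat.exists_eq_add_of_le' hk
    simp [sparseRootBound]
  refine ⟨((k ^ k * sparseRootBound k : ℕ) : ℝ)⁻¹, by positivity, ?_⟩
  intro p hp a ha t ht₀ htm htp hsplit
  obtain ⟨i₁, hi₁⟩ := exists_forall_ne_le_inf'_sup_erase fun i j : Fin (k + 1) =>
    Int.gcd ((t j : ℤ) - (t i : ℤ)) ((p : ℤ) - 1)
  have hnat := pow_last_le_of_splits hk ha ht₀ htm htp hsplit i₁ hi₁
  have hp₀ : (0 : ℝ) < p := by exact_mod_cast hp.out.pos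
  rw [show -((k : ℝ) - 1) = -((k - 1 : ℕ) : ℝ) by push_cast [hk]; ring,
    Real.rpow_neg hp₀.le, Real.rpow_natCast, ← div_eq_mul_inv, div_le_iff₀ (by positivity),
    inv_mul_le_iff₀ (by positivity)]
  exact_mod_cast hnat.trans_eq (mul_assoc _ _ _)
end
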